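/- Let r ≥ 1 be an integer and let d = (d_1,…,d_m) be a chain-type of degree at most r. Then the number of GI-types (I,J) for rank r with Φ_r(I,J) = d equals the number of indices p ∈ {0,1,…,m} such that d_1 + … + d_p ≤ r and d_{p+1} + … + d_m ≤ r. -/

import Mathlib

/-- Minimum of a finite set of naturals, with the convention that `min ∅ = r`. -/
def minD (r : ℕ) (S : Finset ℕ) : ℕ := if h : S.Nonempty then S.min' h else r

/-- `(I, J)` is a GI-type for rank `r`: both are subsets of `{0,…,r-1}` and
`min I + min J ≥ r` (with `min ∅ = r`). -/
def IsGIType (r : ℕ) (I J : Finset ℕ) : Prop :=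
  I ⊆ Finset.range r ∧ J ⊆ Finset.range r ∧ r ≤ minD r I + minD r J

/-- For `S = {i₁ < … < i_p}`, the list of successive differences
`(i₂ - i₁, …, i_p - i_{p-1}, r - i_p)` of the list `(i₁, …, i_p, r)`. -/
def diffs (r : ℕ) (S : Finset ℕ) : List ℕ :=
  List.zipWith (fun a b => b - a) (S.sort (· ≤ ·) ++ [r]) ((S.sort (· ≤ ·) ++ [r]).tail)

/-- The tuple `Φ_r(I,J) = (d₁,…,d_{p+q})` associated to a GI-type `(I,J)`:
for `I = {i₁ < … < i_p}`, `J = {j₁ < … < j_q}`, it is given by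
`d_m = i_{m+1} - i_m` for `1 ≤ m ≤ p` (with `i_{p+1} := r`) and
`d_m = j_{p+q-m+2} - j_{p+q-m+1}` for `p+1 ≤ m ≤ p+q` (with `j_{q+1} := r`). -/
def Phi (r : ℕ) (I J : Finset ℕ) : List ℕ := diffs r I ++ (diffs r J).reverse

/-! A set `S ⊆ {0,…,r-1}` is recovered from its difference list `diffs r S`, whose entries are
positive and sum to `r - min S`; conversely every list of positive integers with sum `≤ r` is the
difference list of exactly one such `S`. Hence a GI-type `(I, J)` with `Φ_r(I,J) = d` is determined
by the split point `p = |I|` of `d`: `I` is rebuilt from `d_1,…,d_p` and `J` from the reversed tail.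
The partial-sum conditions say exactly that both rebuilt sets lie in `{0,…,r-1}`, and then
`min I + min J = 2r - (d_1 + … + d_m) ≥ r`. -/

namespace List

variable {r : ℕ}

def consecDiffs (r : ℕ) (l : List ℕ) : List ℕ :=
  zipWith (fun a b => b - a) (l ++ [r]) (l ++ [r]).tail

def ofConsecDiffs (r : ℕ) : List ℕ → List ℕ
  | [] => []
  | a :: L => (r - (a :: L).sum) :: ofConsecDiffs r L

lemma consecDiffs_cons (x : ℕ) (l : List ℕ) :
    consecDiffs r (x :: l) = (l.headD r - x) :: consecDiffs r l := by
  cases l <;> rfl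

lemma length_consecDiffs (l : List ℕ) : (consecDiffs r l).length = l.length := by
  simp [consecDiffs]

lemma headD_ofConsecDiffs (L : List ℕ) : (ofConsecDiffs r L).headD r = r - L.sum := by
  cases L <;> simp [ofConsecDiffs]

lemma isChain_cons_append_singleton {α : Type*} {R : α → α → Prop} {x a : α} {l : List α} :
    IsChain R (x :: (l ++ [a])) ↔ R x (l.headD a) ∧ IsChain R (l ++ [a]) := by
  cases l <;> simp

lemma isChain_lt_append_singleton_iff {α : Type*} [Preorder α] {l : List α} {a : α} :
    IsChain (· < ·) (l ++ [a]) ↔ l.Pairwise (· < ·) ∧ ∀ x ∈ l, x < a := by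
  simp [isChain_iff_pairwise, pairwise_append]

lemma headD_add_sum_consecDiffs {l : List ℕ} (hl : (l ++ [r]).IsChain (· ≤ ·)) :
    l.headD r + (consecDiffs r l).sum = r := by
  induction l with
  | nil => simp [consecDiffs]
  | cons x l ih =>
    obtain ⟨hx, hl⟩ := isChain_cons_append_singleton.1 hl
    have := ih hl
    rw [consecDiffs_cons, sum_cons, headD_cons]
    omega

lemma ofConsecDiffs_consecDiffs {l : List ℕ} (hl : (l ++ [r]).IsChain (· ≤ ·)) :
    ofConsecDiffs r (consecDiffs r l) = l := by
  induction l with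
  | nil => rfl
  | cons x l ih =>
    obtain ⟨hx, hl⟩ := isChain_cons_append_singleton.1 hl
    have := headD_add_sum_consecDiffs hl
    rw [consecDiffs_cons, ofConsecDiffs, ih hl, sum_cons]
    congr 1
    omega

lemma consecDiffs_ofConsecDiffs {L : List ℕ} (hL : L.sum ≤ r) :
    consecDiffs r (ofConsecDiffs r L) = L := by
  induction L with
  | nil => rfl
  | cons a L ih =>
    rw [sum_cons] at hL
    rw [ofConsecDiffs, consecDiffs_cons, headD_ofConsecDiffs, ih (by omega), sum_cons]
    congr 1
    omega

lemma isChain_ofConsecDiffs_append {L : List ℕ} (hpos : ∀ x ∈ L, 0 < x) (hL : L.sum ≤ r) :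
    (ofConsecDiffs r L ++ [r]).IsChain (· < ·) := by
  induction L with
  | nil => exact isChain_singleton r
  | cons a L ih =>
    rw [sum_cons] at hL
    have ha := hpos a mem_cons_self
    refine isChain_cons_append_singleton.2
      ⟨?_, ih (fun x hx => hpos x (mem_cons_of_mem a hx)) (by omega)⟩
    rw [headD_ofConsecDiffs, sum_cons]
    omega

end List

section Diffs

variable {r : ℕ}

def ofDiffs (r : ℕ) (L : List ℕ) : Finset ℕ := (List.ofConsecDiffs r L).toFinset

lemma isChain_sort_append_of_subset_range {S : Finset ℕ} (hS : S ⊆ Finset.range r) :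
    (S.sort (· ≤ ·) ++ [r]).IsChain (· < ·) :=
  List.isChain_lt_append_singleton_iff.2 ⟨List.sortedLT_iff_pairwise.1 (Finset.sortedLT_sort S),
    fun _ ha => Finset.mem_range.1 (hS ((Finset.mem_sort _).1 ha))⟩

lemma minD_eq_headD_sort (S : Finset ℕ) : minD r S = (S.sort (· ≤ ·)).headD r := by
  unfold minD
  split_ifs with hS
  · rw [Finset.min'_eq_sorted_zero, List.getElem_zero, List.headD_eq_head?_getD,
      List.head?_eq_some_head]
    rfl
  · simp [Finset.not_nonempty_iff_eq_empty.1 hS]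

lemma minD_add_sum_diffs {S : Finset ℕ} (hS : S ⊆ Finset.range r) :
    minD r S + (diffs r S).sum = r := by
  rw [minD_eq_headD_sort]
  exact List.headD_add_sum_consecDiffs
    ((isChain_sort_append_of_subset_range hS).imp fun _ _ => le_of_lt)

lemma length_diffs (S : Finset ℕ) : (diffs r S).length = S.card :=
  (List.length_consecDiffs _).trans (Finset.length_sort _)

lemma ofDiffs_diffs {S : Finset ℕ} (hS : S ⊆ Finset.range r) : ofDiffs r (diffs r S) = S :=
  (congrArg List.toFinset (List.ofConsecDiffs_consecDiffs
    ((isChain_sort_append_of_subset_range hS).imp fun _ _ => le_of_lt))).trans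
    (Finset.sort_toFinset _ _)

variable {L : List ℕ}

lemma sort_ofDiffs (hpos : ∀ x ∈ L, 0 < x) (hL : L.sum ≤ r) :
    (ofDiffs r L).sort (· ≤ ·) = List.ofConsecDiffs r L := by
  have hlt :=
    (List.isChain_lt_append_singleton_iff.1 (List.isChain_ofConsecDiffs_append hpos hL)).1
  exact (List.toFinset_sort _ hlt.nodup).2 (hlt.imp le_of_lt)

lemma diffs_ofDiffs (hpos : ∀ x ∈ L, 0 < x) (hL : L.sum ≤ r) : diffs r (ofDiffs r L) = L := by
  rw [diffs, sort_ofDiffs hpos hL, ← List.consecDiffs, List.consecDiffs_ofConsecDiffs hL]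

lemma ofDiffs_subset_range (hpos : ∀ x ∈ L, 0 < x) (hL : L.sum ≤ r) :
    ofDiffs r L ⊆ Finset.range r := by
  intro y hy
  exact Finset.mem_range.2 ((List.isChain_lt_append_singleton_iff.1
    (List.isChain_ofConsecDiffs_append hpos hL)).2 y (List.mem_toFinset.1 hy))

lemma card_ofDiffs (hpos : ∀ x ∈ L, 0 < x) (hL : L.sum ≤ r) : (ofDiffs r L).card = L.length := by
  rw [← length_diffs, diffs_ofDiffs hpos hL]

lemma Phi_eq_iff {I J : Finset ℕ} {d : List ℕ} :
    Phi r I J = d ↔ diffs r I = d.take I.card ∧ diffs r J = (d.drop I.card).reverse := by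
  constructor
  · rintro rfl
    rw [Phi, List.take_left' (length_diffs I), List.drop_left' (length_diffs I),
      List.reverse_reverse]
    exact ⟨rfl, rfl⟩
  · rintro ⟨hI, hJ⟩
    rw [Phi, hI, hJ, List.reverse_reverse, List.take_append_drop]

end Diffs

section Fiber

variable {r : ℕ} {d : List ℕ}

def splitGIType (r : ℕ) (d : List ℕ) (p : ℕ) : Finset ℕ × Finset ℕ :=
  (ofDiffs r (d.take p), ofDiffs r (d.drop p).reverse)

lemma card_fst_splitGIType (hpos : ∀ x ∈ d, 0 < x) {p : ℕ} (hp : p ≤ d.length)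
    (hsum : (d.take p).sum ≤ r) : (splitGIType r d p).1.card = p := by
  rw [splitGIType, card_ofDiffs (fun x hx => hpos x (List.mem_of_mem_take hx)) hsum,
    List.length_take_of_le hp]

lemma setOf_isGIType_and_phi_eq (hpos : ∀ x ∈ d, 0 < x) (hdeg : d.sum ≤ r) :
    {IJ : Finset ℕ × Finset ℕ | IsGIType r IJ.1 IJ.2 ∧ Phi r IJ.1 IJ.2 = d} =
      ((Finset.range (d.length + 1)).filter
        (fun p => (d.take p).sum ≤ r ∧ (d.drop p).sum ≤ r)).image (splitGIType r d) := by
  ext ⟨I, J⟩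
  simp only [Set.mem_ofPred_eq, Finset.coe_image, Finset.coe_filter, Finset.mem_range,
    Set.mem_image]
  constructor
  · rintro ⟨⟨hI, hJ, -⟩, hPhi⟩
    obtain ⟨hdI, hdJ⟩ := Phi_eq_iff.1 hPhi
    have hsumI := minD_add_sum_diffs hI
    have hsumJ := minD_add_sum_diffs hJ
    have hlen := congrArg List.length hdI
    rw [hdI] at hsumI
    rw [hdJ, List.sum_reverse] at hsumJ
    rw [length_diffs, List.length_take] at hlen
    refine ⟨I.card, ⟨by omega, by omega, by omega⟩, ?_⟩
    rw [splitGIType, ← hdI, ← hdJ, ofDiffs_diffs hI, ofDiffs_diffs hJ]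
  · rintro ⟨p, ⟨-, htake, hdrop⟩, hIJ⟩
    obtain ⟨rfl, rfl⟩ := Prod.mk.inj hIJ
    have hpos₁ : ∀ x ∈ d.take p, 0 < x := fun x hx => hpos x (List.mem_of_mem_take hx)
    have hpos₂ : ∀ x ∈ (d.drop p).reverse, 0 < x := fun x hx =>
      hpos x (List.mem_of_mem_drop (List.mem_reverse.1 hx))
    rw [← List.sum_reverse] at hdrop
    have hminI := minD_add_sum_diffs (ofDiffs_subset_range hpos₁ htake)
    have hminJ := minD_add_sum_diffs (ofDiffs_subset_range hpos₂ hdrop)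
    rw [diffs_ofDiffs hpos₁ htake] at hminI
    rw [diffs_ofDiffs hpos₂ hdrop, List.sum_reverse] at hminJ
    refine ⟨⟨ofDiffs_subset_range hpos₁ htake, ofDiffs_subset_range hpos₂ hdrop, ?_⟩, ?_⟩
    · have hsplit : (d.take p).sum + (d.drop p).sum = d.sum := by
        rw [← List.sum_append, List.take_append_drop]
      omega
    · rw [Phi, diffs_ofDiffs hpos₁ htake, diffs_ofDiffs hpos₂ hdrop, List.reverse_reverse,
        List.take_append_drop]

end Fiber

theorem phi_fiber_card_general (r : ℕ) (d : List ℕ)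
    (hpos : ∀ x ∈ d, 1 ≤ x) (hdeg : d.sum ≤ r) :
    {IJ : Finset ℕ × Finset ℕ | IsGIType r IJ.1 IJ.2 ∧ Phi r IJ.1 IJ.2 = d}.ncard =
      ((Finset.range (d.length + 1)).filter
        (fun p => (d.take p).sum ≤ r ∧ (d.drop p).sum ≤ r)).card := by
  rw [setOf_isGIType_and_phi_eq hpos hdeg, Set.ncard_coe_finset, Finset.card_image_of_injOn]
  intro p hp q hq hpq
  simp only [Finset.coe_filter, Finset.mem_range, Set.mem_ofPred_eq] at hp hq
  rw [← card_fst_splitGIType hpos (Nat.le_of_lt_succ hp.1) hp.2.1,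
    ← card_fst_splitGIType hpos (Nat.le_of_lt_succ hq.1) hq.2.1, hpq]

theorem phi_fiber_card (r : ℕ) (hr : 1 ≤ r) (d : List ℕ)
    (hpos : ∀ x ∈ d, 1 ≤ x) (hdeg : d.sum ≤ r) :
    {IJ : Finset ℕ × Finset ℕ | IsGIType r IJ.1 IJ.2 ∧ Phi r IJ.1 IJ.2 = d}.ncard =
      ((Finset.range (d.length + 1)).filter
        (fun p => (d.take p).sum ≤ r ∧ (d.drop p).sum ≤ r)).card :=
  phi_fiber_card_general r d hpos hdeg
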